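/- arXiv:2407.16211 — 4 statements merged into one kernel-verified Lean document; each statement's English description precedes it below -/
import Mathlib

section
/- Let H : (0, ρ] → (0,∞) be absolutely continuous and suppose there exist constants C > 0, α ∈ (0,1], n ∈ ℕ, and m₀ > 0 such that |H'(t) − (n/t)H(t) − 2 D(t)| ≤ C t^{α−1} H(t) for a.e. t, where D : (0,ρ] → [0,∞) satisfies 0 ≤ t·D(t)/H(t) ≤ m₀ for all t. Then t ↦ H(t)/t^n · exp(C' t^α) is nondecreasing and t ↦ H(t)/t^{n+2m₀} · exp(−C' t^α) is nonincreasing on (0, ρ], for a constant C' depending only on C, α. -/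
open MeasureTheory Set Filter

noncomputable section

lemma fub_step (a b : ℝ) (hab : a ≤ b) (H' ψ ψ' : ℝ → ℝ)
    (hH'int : IntervalIntegrable H' volume a b)
    (hψ : ∀ t ∈ Set.Icc a b, HasDerivAt ψ (ψ' t) t)
    (hψ'cont : ContinuousOn ψ' (Set.Icc a b)) :
    ∫ t in a..b, (∫ s in a..t, H' s) * ψ' t = ∫ s in a..b, H' s * (ψ b - ψ s) := by
  set μ := volume.restrict (Set.Ioc a b) with hμ
  have hH'' : IntegrableOn H' (Set.Ioc a b) := hH'int.1
  have hψ'int : IntegrableOn ψ' (Set.Ioc a b) :=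
    (hψ'cont.integrableOn_Icc).mono_set Set.Ioc_subset_Icc_self
  -- the two integrands over the square
  have base1 : Integrable (fun p : ℝ × ℝ => H' p.1 * ψ' p.2) (μ.prod μ) :=
    hH''.mul_prod hψ'int
  have base2 : Integrable (fun p : ℝ × ℝ => ψ' p.1 * H' p.2) (μ.prod μ) :=
    hψ'int.mul_prod hH''
  set f : ℝ → ℝ → ℝ := fun s t => if s ≤ t then H' s * ψ' t else 0 with hf
  have hint1 : Integrable (Function.uncurry f) (μ.prod μ) := by
    have : Function.uncurry f =
        Set.indicator {p : ℝ × ℝ | p.1 ≤ p.2} (fun p => H' p.1 * ψ' p.2) := by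
      funext p
      by_cases h : p.1 ≤ p.2 <;>
        simp [Function.uncurry, hf, Set.indicator_apply, h, Set.mem_setOf_eq]
    rw [this]
    exact base1.indicator (measurableSet_le measurable_fst measurable_snd)
  have hint2 : Integrable (Function.uncurry (fun t s => f s t)) (μ.prod μ) := by
    have : Function.uncurry (fun t s => f s t) =
        Set.indicator {p : ℝ × ℝ | p.2 ≤ p.1} (fun p => ψ' p.1 * H' p.2) := by
      funext p
      by_cases h : p.2 ≤ p.1 <;>
        simp [Function.uncurry, hf, Set.indicator_apply, h, Set.mem_setOf_eq, mul_comm]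
    rw [this]
    exact base2.indicator (measurableSet_le measurable_snd measurable_fst)
  have swap : (∫ t, ∫ s, f s t ∂μ ∂μ) = ∫ s, ∫ t, f s t ∂μ ∂μ := by
    exact integral_integral_swap hint2
  calc ∫ t in a..b, (∫ s in a..t, H' s) * ψ' t
      = ∫ t, (∫ s in a..t, H' s) * ψ' t ∂μ := intervalIntegral.integral_of_le hab
    _ = ∫ t, ∫ s, f s t ∂μ ∂μ := by
        refine integral_congr_ae ?_
        filter_upwards [ae_restrict_mem measurableSet_Ioc] with t ht
        have e1 : ∀ s, f s t = Set.indicator (Set.Iic t) H' s * ψ' t := by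
          intro s
          by_cases h : s ≤ t <;> simp [hf, Set.indicator_apply, h]
        simp_rw [e1]
        rw [integral_mul_const]
        congr 1
        rw [integral_indicator measurableSet_Iic, hμ,
          Measure.restrict_restrict measurableSet_Iic]
        have : Set.Iic t ∩ Set.Ioc a b = Set.Ioc a t := by
          ext s
          simp only [Set.mem_inter_iff, Set.mem_Iic, Set.mem_Ioc]
          exact ⟨fun ⟨h1, h2, h3⟩ => ⟨h2, h1⟩, fun ⟨h1, h2⟩ => ⟨h2, h1, h2.trans ht.2⟩⟩
        rw [this, ← intervalIntegral.integral_of_le ht.1.le]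
    _ = ∫ s, ∫ t, f s t ∂μ ∂μ := swap
    _ = ∫ s, H' s * (ψ b - ψ s) ∂μ := by
        refine integral_congr_ae ?_
        filter_upwards [ae_restrict_mem measurableSet_Ioc] with s hs
        have e2 : ∀ t, f s t = Set.indicator (Set.Ici s) (fun t => H' s * ψ' t) t := by
          intro t
          by_cases h : s ≤ t <;> simp [hf, Set.indicator_apply, h]
        simp_rw [e2]
        rw [integral_indicator measurableSet_Ici, hμ,
          Measure.restrict_restrict measurableSet_Ici]
        have hIcc : Set.Ici s ∩ Set.Ioc a b = Set.Icc s b := by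
          ext t
          simp only [Set.mem_inter_iff, Set.mem_Ici, Set.mem_Ioc, Set.mem_Icc]
          exact ⟨fun ⟨h1, _, h3⟩ => ⟨h1, h3⟩, fun ⟨h1, h2⟩ => ⟨h1, hs.1.trans_le h1, h2⟩⟩
        rw [hIcc, integral_Icc_eq_integral_Ioc, ← intervalIntegral.integral_of_le hs.2,
          intervalIntegral.integral_const_mul]
        congr 1
        have hsub : Set.uIcc s b ⊆ Set.Icc a b := by
          rw [Set.uIcc_of_le hs.2]
          exact Set.Icc_subset_Icc hs.1.le le_rfl
        exact intervalIntegral.integral_eq_sub_of_hasDerivAt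
          (fun t ht => hψ t (hsub ht))
          ((hψ'cont.mono hsub).intervalIntegrable)
    _ = ∫ s in a..b, H' s * (ψ b - ψ s) := (intervalIntegral.integral_of_le hab).symm

lemma parts_ac (a b : ℝ) (hab : a ≤ b) (H H' ψ ψ' : ℝ → ℝ)
    (hH'int : IntervalIntegrable H' volume a b)
    (hftc : ∀ t ∈ Set.Icc a b, H t - H a = ∫ s in a..t, H' s)
    (hψ : ∀ t ∈ Set.Icc a b, HasDerivAt ψ (ψ' t) t)
    (hψ'cont : ContinuousOn ψ' (Set.Icc a b)) :
    H b * ψ b - H a * ψ a = ∫ t in a..b, (H' t * ψ t + H t * ψ' t) := by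
  have huIcc : Set.uIcc a b = Set.Icc a b := Set.uIcc_of_le hab
  have hψcont : ContinuousOn ψ (Set.Icc a b) := fun t ht =>
    (hψ t ht).continuousAt.continuousWithinAt
  have hPcont : ContinuousOn (fun t => ∫ s in a..t, H' s) (Set.Icc a b) := by
    have := intervalIntegral.continuousOn_primitive_interval'
      (μ := volume) (f := H') (b₁ := a) (b₂ := b) hH'int
      (by rw [huIcc]; exact Set.left_mem_Icc.2 hab)
    rwa [huIcc] at this
  have hHcont : ContinuousOn H (Set.Icc a b) := by
    refine ContinuousOn.congr ((continuousOn_const (c := H a)).add hPcont) (fun t ht => ?_)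
    have := hftc t ht
    show H t = H a + ∫ s in a..t, H' s
    linarith
  have i1 : IntervalIntegrable (fun t => H' t * ψ t) volume a b :=
    hH'int.mul_continuousOn (by rwa [huIcc])
  have i2 : IntervalIntegrable (fun t => H t * ψ' t) volume a b :=
    ((hHcont.mul hψ'cont).mono (by rw [huIcc])).intervalIntegrable
  have i3 : IntervalIntegrable ψ' volume a b :=
    (hψ'cont.mono (by rw [huIcc])).intervalIntegrable
  have i4 : IntervalIntegrable (fun t => (∫ s in a..t, H' s) * ψ' t) volume a b :=
    ((hPcont.mul hψ'cont).mono (by rw [huIcc])).intervalIntegrable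
  have eψ : ∫ t in a..b, ψ' t = ψ b - ψ a :=
    intervalIntegral.integral_eq_sub_of_hasDerivAt
      (fun t ht => hψ t (huIcc ▸ ht)) i3
  have e2 : ∫ t in a..b, H t * ψ' t
      = H a * (ψ b - ψ a) + ∫ s in a..b, H' s * (ψ b - ψ s) := by
    have step : ∫ t in a..b, H t * ψ' t
        = ∫ t in a..b, (H a * ψ' t + (∫ s in a..t, H' s) * ψ' t) := by
      refine intervalIntegral.integral_congr (fun t ht => ?_)
      have h := hftc t (huIcc ▸ ht)
      have : H t = H a + ∫ s in a..t, H' s := by linarith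
      rw [this]; ring
    rw [step, intervalIntegral.integral_add (i3.const_mul (H a)) i4,
      intervalIntegral.integral_const_mul, eψ,
      fub_step a b hab H' ψ ψ' hH'int hψ hψ'cont]
  have e3 : ∫ s in a..b, H' s * (ψ b - ψ s)
      = ψ b * (H b - H a) - ∫ s in a..b, H' s * ψ s := by
    have step : ∫ s in a..b, H' s * (ψ b - ψ s)
        = ∫ s in a..b, (ψ b * H' s - H' s * ψ s) := by
      exact intervalIntegral.integral_congr (fun t _ => by ring)
    rw [step, intervalIntegral.integral_sub (hH'int.const_mul (ψ b)) i1,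
      intervalIntegral.integral_const_mul,
      ← hftc b (Set.right_mem_Icc.2 hab)]
  rw [intervalIntegral.integral_add i1 i2, e2, e3]
  ring

lemma key_exp (a b : ℝ) (hab : a ≤ b) (H H' g g' : ℝ → ℝ)
    (hH'int : IntervalIntegrable H' volume a b)
    (hftc : ∀ t ∈ Set.Icc a b, H t - H a = ∫ s in a..t, H' s)
    (hg : ∀ t ∈ Set.Icc a b, HasDerivAt g (g' t) t)
    (hg'cont : ContinuousOn g' (Set.Icc a b)) :
    H b * Real.exp (g b) - H a * Real.exp (g a)
      = ∫ t in a..b, (H' t + H t * g' t) * Real.exp (g t) := by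
  have hgcont : ContinuousOn g (Set.Icc a b) := fun t ht =>
    (hg t ht).continuousAt.continuousWithinAt
  have := parts_ac a b hab H H' (fun t => Real.exp (g t))
    (fun t => Real.exp (g t) * g' t) hH'int hftc
    (fun t ht => (hg t ht).exp)
    ((Real.continuous_exp.comp_continuousOn hgcont).mul hg'cont)
  rw [this]
  exact intervalIntegral.integral_congr (fun t _ => by ring)

set_option maxHeartbeats 1000000 in
/-- If `H > 0` is absolutely continuous on `(0,ρ]` with
`|H'(t) − (n/t)H(t) − 2D(t)| ≤ C t^{α−1} H(t)` a.e., where `D ≥ 0` and the frequency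
`t D(t)/H(t)` is bounded by `m₀`, then `t ↦ H(t)/t^n · exp(C' t^α)` is nondecreasing and
`t ↦ H(t)/t^{n+2m₀} · exp(−C' t^α)` is nonincreasing on `(0,ρ]`, with `C' = C'(C, α)`. -/
theorem stmt5 (C α : ℝ) (hC : 0 < C) (hα : α ∈ Set.Ioc (0 : ℝ) 1) :
    ∃ C' > (0 : ℝ), ∀ (n : ℕ) (m₀ ρ : ℝ), 0 < m₀ → 0 < ρ →
      ∀ H H' D : ℝ → ℝ,
      (∀ t ∈ Set.Ioc (0 : ℝ) ρ, 0 < H t) →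
      (∀ t ∈ Set.Ioc (0 : ℝ) ρ, 0 ≤ D t) →
      (∀ t ∈ Set.Ioc (0 : ℝ) ρ, t * D t / H t ≤ m₀) →
      (∀ a ∈ Set.Ioc (0 : ℝ) ρ, ∀ b ∈ Set.Ioc (0 : ℝ) ρ,
        IntervalIntegrable H' volume a b) →
      (∀ a ∈ Set.Ioc (0 : ℝ) ρ, ∀ b ∈ Set.Ioc (0 : ℝ) ρ,
        H b - H a = ∫ t in a..b, H' t) →
      (∀ᵐ t ∂(volume.restrict (Set.Ioc (0 : ℝ) ρ)),
        |H' t - ((n : ℝ) / t) * H t - 2 * D t| ≤ C * t ^ (α - 1) * H t) →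
      MonotoneOn (fun t => H t / t ^ (n : ℝ) * Real.exp (C' * t ^ α))
        (Set.Ioc (0 : ℝ) ρ) ∧
      AntitoneOn (fun t => H t / t ^ ((n : ℝ) + 2 * m₀) * Real.exp (-(C' * t ^ α)))
        (Set.Ioc (0 : ℝ) ρ) := by

  obtain ⟨hα0, hα1⟩ := hα
  have hαne : α ≠ 0 := hα0.ne'
  refine ⟨C / α, div_pos hC hα0, ?_⟩
  intro n m₀ ρ hm₀ hρ H H' D hHpos hDpos hfreq hint hFTC hae
  have hderiv : ∀ (δ β t : ℝ), 0 < t →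
      HasDerivAt (fun t => δ * t ^ α - β * Real.log t)
        (δ * (α * t ^ (α - 1)) - β * t⁻¹) t := by
    intro δ β t ht
    exact ((Real.hasDerivAt_rpow_const (p := α) (Or.inl ht.ne')).const_mul δ).sub
      ((Real.hasDerivAt_log ht.ne').const_mul β)
  have hg'cont : ∀ (δ β a b : ℝ), 0 < a →
      ContinuousOn (fun t : ℝ => δ * (α * t ^ (α - 1)) - β * t⁻¹) (Set.Icc a b) := by
    intro δ β a b ha t ht
    have ht0 : t ≠ 0 := (ha.trans_le ht.1).ne'
    have hc : ContinuousAt (fun t : ℝ => δ * (α * t ^ (α - 1)) - β * t⁻¹) t :=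
      (((Real.continuousAt_rpow_const t (α - 1) (Or.inl ht0)).const_mul α).const_mul
        δ).sub ((continuousAt_inv₀ ht0).const_mul β)
    exact hc.continuousWithinAt
  have keyed : ∀ (δ β : ℝ), ∀ a ∈ Set.Ioc (0:ℝ) ρ, ∀ b ∈ Set.Ioc (0:ℝ) ρ, a ≤ b →
      H b * Real.exp (δ * b ^ α - β * Real.log b)
        - H a * Real.exp (δ * a ^ α - β * Real.log a)
      = ∫ t in a..b, (H' t + H t * (δ * (α * t ^ (α - 1)) - β * t⁻¹))
          * Real.exp (δ * t ^ α - β * Real.log t) := by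
    intro δ β a ha b hb hab
    refine key_exp a b hab H H' (fun t => δ * t ^ α - β * Real.log t)
      (fun t => δ * (α * t ^ (α - 1)) - β * t⁻¹) (hint a ha b hb) ?_
      (fun t ht => hderiv δ β t (ha.1.trans_le ht.1)) (hg'cont δ β a b ha.1)
    intro t ht
    exact hFTC a ha t ⟨ha.1.trans_le ht.1, ht.2.trans hb.2⟩
  have haesub : ∀ {a b : ℝ}, a ∈ Set.Ioc (0:ℝ) ρ → b ∈ Set.Ioc (0:ℝ) ρ →
      (∀ᵐ t ∂(volume.restrict (Set.Ioc a b)), t ∈ Set.Ioc (0:ℝ) ρ ∧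
        |H' t - ((n : ℝ) / t) * H t - 2 * D t| ≤ C * t ^ (α - 1) * H t) := by
    intro a b ha hb
    have hsub : Set.Ioc a b ⊆ Set.Ioc (0:ℝ) ρ := Set.Ioc_subset_Ioc ha.1.le hb.2
    have h1 := hae.filter_mono (ae_mono (Measure.restrict_mono hsub le_rfl))
    filter_upwards [h1, ae_restrict_mem measurableSet_Ioc] with t h1 h2
    exact ⟨hsub h2, h1⟩
  constructor
  · intro a ha b hb hab
    have hkey := keyed (C / α) n a ha b hb hab
    have hnonneg : 0 ≤ ∫ t in a..b,
        (H' t + H t * ((C / α) * (α * t ^ (α - 1)) - (n : ℝ) * t⁻¹))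
          * Real.exp ((C / α) * t ^ α - (n : ℝ) * Real.log t) := by
      apply intervalIntegral.integral_nonneg_of_ae_restrict hab
      rw [← restrict_Ioc_eq_restrict_Icc]
      filter_upwards [haesub ha hb] with t hmem
      obtain ⟨htρ, habs⟩ := hmem
      have ht0 : 0 < t := htρ.1
      have htne : t ≠ 0 := ht0.ne'
      refine mul_nonneg ?_ (Real.exp_pos _).le
      have heq : H' t + H t * ((C / α) * (α * t ^ (α - 1)) - (n : ℝ) * t⁻¹)
          = (H' t - ((n : ℝ) / t) * H t - 2 * D t) + C * t ^ (α - 1) * H t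
            + 2 * D t := by
        field_simp
        ring
      rw [heq]
      have h1 := (abs_le.1 habs).1
      have h2 := hDpos t htρ
      linarith
    have hform : ∀ t ∈ Set.Ioc (0:ℝ) ρ,
        H t / t ^ (n : ℝ) * Real.exp (C / α * t ^ α)
          = H t * Real.exp ((C / α) * t ^ α - (n : ℝ) * Real.log t) := by
      intro t ht
      rw [Real.rpow_def_of_pos ht.1, div_eq_mul_inv, ← Real.exp_neg, mul_assoc,
        ← Real.exp_add]
      congr 1
      rw [Real.exp_eq_exp]
      ring
    show H a / a ^ (n : ℝ) * Real.exp (C / α * a ^ α)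
      ≤ H b / b ^ (n : ℝ) * Real.exp (C / α * b ^ α)
    rw [hform a ha, hform b hb]
    linarith
  · intro a ha b hb hab
    have hkey := keyed (-(C / α)) ((n : ℝ) + 2 * m₀) a ha b hb hab
    have hnonneg : 0 ≤ ∫ t in a..b,
        -((H' t + H t * (-(C / α) * (α * t ^ (α - 1)) - ((n : ℝ) + 2 * m₀) * t⁻¹))
          * Real.exp (-(C / α) * t ^ α - ((n : ℝ) + 2 * m₀) * Real.log t)) := by
      apply intervalIntegral.integral_nonneg_of_ae_restrict hab
      rw [← restrict_Ioc_eq_restrict_Icc]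
      filter_upwards [haesub ha hb] with t hmem
      obtain ⟨htρ, habs⟩ := hmem
      have ht0 : 0 < t := htρ.1
      have htne : t ≠ 0 := ht0.ne'
      simp only [Pi.zero_apply]
      rw [neg_nonneg]
      refine mul_nonpos_iff.2 (Or.inr ⟨?_, (Real.exp_pos _).le⟩)
      have heq : H' t + H t * (-(C / α) * (α * t ^ (α - 1)) - ((n : ℝ) + 2 * m₀) * t⁻¹)
          = (H' t - ((n : ℝ) / t) * H t - 2 * D t) - C * t ^ (α - 1) * H t
            + 2 * D t - 2 * (m₀ * (H t * t⁻¹)) := by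
        field_simp
        ring
      rw [heq]
      have h1 := (abs_le.1 habs).2
      have h3 : t * D t ≤ m₀ * H t := (div_le_iff₀ (hHpos t htρ)).1 (hfreq t htρ)
      have h4 : D t ≤ m₀ * (H t * t⁻¹) := by
        have h5 := mul_le_mul_of_nonneg_right h3 (inv_nonneg.2 ht0.le)
        rw [mul_comm t (D t), mul_assoc, mul_inv_cancel₀ htne, mul_one,
          mul_assoc] at h5
        exact h5
      linarith
    rw [intervalIntegral.integral_neg] at hnonneg
    have hform : ∀ t ∈ Set.Ioc (0:ℝ) ρ,
        H t / t ^ ((n : ℝ) + 2 * m₀) * Real.exp (-(C / α * t ^ α))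
          = H t * Real.exp (-(C / α) * t ^ α - ((n : ℝ) + 2 * m₀) * Real.log t) := by
      intro t ht
      rw [Real.rpow_def_of_pos ht.1, div_eq_mul_inv, ← Real.exp_neg,
        mul_assoc, ← Real.exp_add]
      congr 1
      rw [Real.exp_eq_exp]
      ring
    show H b / b ^ ((n : ℝ) + 2 * m₀) * Real.exp (-(C / α * b ^ α))
      ≤ H a / a ^ ((n : ℝ) + 2 * m₀) * Real.exp (-(C / α * a ^ α))
    rw [hform a ha, hform b hb]
    linarith
end
end

section
/- Let I : (0, r_ε] → [c, ∞) with c > 0, and suppose additionally: (i) there exist C > 0 and α ∈ (0,1] with |(d/dr) ln(H(r)/r^n) − 2 I(r)/r| ≤ C r^{α−1} (I(r) + I(r)^{1/2}) for a.e. r, for some positive absolutely continuous H; (ii) I(r) ≤ M + ε for all r ∈ (0, r_ε]. Then for all 0 < r < s < r_ε, H(s)/s^{n+2(M+ε)} · e^{−C' s^α} ≤ H(r)/r^{n+2(M+ε)} · e^{−C' r^α} for a constant C' depending on C, M, α. Consequently, sup{θ : liminf_{ρ→0} H(ρ)/ρ^{n+2θ} > 0} ≤ M + ε. -/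
open MeasureTheory Filter Set
open scoped Topology ENNReal

noncomputable section

/-- If `I ≥ c > 0` on `(0, r_ε]`, `I ≤ M + ε`, `H > 0` and
`|(d/dr) ln(H(r)/r^n) − 2 I(r)/r| ≤ C r^{α−1}(I(r) + I(r)^{1/2})` a.e. (encoded via the
fundamental theorem of calculus with derivative `L'`), then for a constant
`C' = C'(C, M, α, ε)` the function `r ↦ H(r)/r^{n+2(M+ε)} · e^{−C' r^α}` is nonincreasing;
consequently the upper order of contact `inf{θ : liminf_{ρ→0} H(ρ)/ρ^{n+2θ} > 0}` is at most
`M + ε`. -/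
theorem stmt9 (C M α ε : ℝ) (hC : 0 < C) (hM : 0 < M) (hα : α ∈ Set.Ioc (0 : ℝ) 1)
    (hε : 0 < ε) :
    ∃ C' > (0 : ℝ), ∀ (n : ℕ) (c rε : ℝ), 0 < c → 0 < rε →
      ∀ I H L' : ℝ → ℝ,
      (∀ r ∈ Set.Ioc (0 : ℝ) rε, c ≤ I r) →
      (∀ r ∈ Set.Ioc (0 : ℝ) rε, I r ≤ M + ε) →
      (∀ r ∈ Set.Ioc (0 : ℝ) rε, 0 < H r) →
      (∀ a ∈ Set.Ioc (0 : ℝ) rε, ∀ b ∈ Set.Ioc (0 : ℝ) rε,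
        IntervalIntegrable L' volume a b) →
      (∀ a ∈ Set.Ioc (0 : ℝ) rε, ∀ b ∈ Set.Ioc (0 : ℝ) rε,
        Real.log (H b / b ^ (n : ℝ)) - Real.log (H a / a ^ (n : ℝ)) = ∫ r in a..b, L' r) →
      (∀ᵐ r ∂(volume.restrict (Set.Ioc (0 : ℝ) rε)),
        |L' r - 2 * I r / r| ≤ C * r ^ (α - 1) * (I r + Real.sqrt (I r))) →
      (∀ r s : ℝ, 0 < r → r < s → s < rε →
        H s / s ^ ((n : ℝ) + 2 * (M + ε)) * Real.exp (-(C' * s ^ α)) ≤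
          H r / r ^ ((n : ℝ) + 2 * (M + ε)) * Real.exp (-(C' * r ^ α))) ∧
      sInf ((fun θ : ℝ => (θ : EReal)) ''
          {θ : ℝ | 0 < liminf (fun ρ : ℝ => ENNReal.ofReal (H ρ / ρ ^ ((n : ℝ) + 2 * θ)))
            (𝓝[>] (0 : ℝ))}) ≤ ((M + ε : ℝ) : EReal) := by
  obtain ⟨hα0, hα1⟩ := hα
  set θ : ℝ := M + ε with hθ
  have hθpos : 0 < θ := by positivity
  set K : ℝ := θ + Real.sqrt θ with hK
  have hKpos : 0 < K := by positivity
  refine ⟨C * K / α, by positivity, ?_⟩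
  intro n c rε hc hrε I H L' hIc hIM hH hInt hFTC hae
  set C' : ℝ := C * K / α with hC'
  have hC'pos : 0 < C' := by positivity
  have mono : ∀ r s : ℝ, 0 < r → r < s → s < rε →
      H s / s ^ ((n : ℝ) + 2 * θ) * Real.exp (-(C' * s ^ α)) ≤
        H r / r ^ ((n : ℝ) + 2 * θ) * Real.exp (-(C' * r ^ α)) := by
    intro r s hr0 hrs hsrε
    have hs0 : 0 < s := hr0.trans hrs
    have hrmem : r ∈ Set.Ioc (0 : ℝ) rε := ⟨hr0, (hrs.trans hsrε).le⟩
    have hsmem : s ∈ Set.Ioc (0 : ℝ) rε := ⟨hs0, hsrε.le⟩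
    have hsub : Set.Icc r s ⊆ Set.Ioc (0 : ℝ) rε := fun t ht =>
      ⟨lt_of_lt_of_le hr0 ht.1, le_trans ht.2 hsrε.le⟩
    have haebound : ∀ᵐ t ∂(volume.restrict (Set.Icc r s)),
        L' t ≤ 2 * θ / t + C * K * t ^ (α - 1) := by
      have h1 := ae_restrict_of_ae_restrict_of_subset hsub hae
      have h2 := ae_restrict_mem (μ := volume) measurableSet_Icc (s := Set.Icc r s)
      filter_upwards [h1, h2] with t hta htmem
      have htmem' : t ∈ Set.Ioc (0 : ℝ) rε := hsub htmem
      have ht0 : 0 < t := htmem'.1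
      have hIt : I t ≤ θ := hIM t htmem'
      have hIt0 : 0 ≤ I t := le_trans hc.le (hIc t htmem')
      have hsq : Real.sqrt (I t) ≤ Real.sqrt θ := Real.sqrt_le_sqrt hIt
      have hrpow : (0:ℝ) ≤ C * t ^ (α - 1) := by positivity
      have h3 : L' t ≤ 2 * I t / t + C * t ^ (α - 1) * (I t + Real.sqrt (I t)) := by
        have := (abs_le.mp hta).2
        linarith
      have h4 : 2 * I t / t ≤ 2 * θ / t := by gcongr
      have h5 : C * t ^ (α - 1) * (I t + Real.sqrt (I t)) ≤ C * t ^ (α - 1) * K :=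
        mul_le_mul_of_nonneg_left (add_le_add hIt hsq) hrpow
      nlinarith
    have hcont1 : ContinuousOn (fun t : ℝ => 2 * θ / t) (Set.uIcc r s) := by
      rw [Set.uIcc_of_le hrs.le]
      exact ContinuousOn.div continuousOn_const continuousOn_id
        (fun t ht => ne_of_gt (lt_of_lt_of_le hr0 ht.1))
    have hcont2 : ContinuousOn (fun t : ℝ => C * K * t ^ (α - 1)) (Set.uIcc r s) := by
      rw [Set.uIcc_of_le hrs.le]
      exact ContinuousOn.mul continuousOn_const <|
        ContinuousOn.rpow_const continuousOn_id
          (fun t ht => Or.inl (ne_of_gt (lt_of_lt_of_le hr0 ht.1)))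
    have hgint1 : IntervalIntegrable (fun t : ℝ => 2 * θ / t) volume r s :=
      hcont1.intervalIntegrable
    have hgint2 : IntervalIntegrable (fun t : ℝ => C * K * t ^ (α - 1)) volume r s :=
      hcont2.intervalIntegrable
    have hLint : IntervalIntegrable L' volume r s := hInt r hrmem s hsmem
    have hle : (∫ t in r..s, L' t) ≤
        ∫ t in r..s, (2 * θ / t + C * K * t ^ (α - 1)) :=
      intervalIntegral.integral_mono_ae_restrict hrs.le hLint (hgint1.add hgint2) haebound
    have hnotmem : (0:ℝ) ∉ Set.uIcc r s := by
      rw [Set.uIcc_of_le hrs.le]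
      intro h; exact absurd h.1 (not_le.mpr hr0)
    have hint1 : (∫ t in r..s, 2 * θ / t) = 2 * θ * (Real.log s - Real.log r) := by
      simp_rw [div_eq_mul_inv]
      rw [intervalIntegral.integral_const_mul, integral_inv hnotmem,
        Real.log_div (ne_of_gt hs0) (ne_of_gt hr0)]
    have hint2 : (∫ t in r..s, C * K * t ^ (α - 1)) = C' * (s ^ α - r ^ α) := by
      rw [intervalIntegral.integral_const_mul, integral_rpow (Or.inl (by linarith))]
      have : α - 1 + 1 = α := by ring
      rw [this, hC']
      field_simp
    have hgval : (∫ t in r..s, (2 * θ / t + C * K * t ^ (α - 1))) =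
        2 * θ * (Real.log s - Real.log r) + C' * (s ^ α - r ^ α) := by
      rw [intervalIntegral.integral_add hgint1 hgint2, hint1, hint2]
    have hFTCrs := hFTC r hrmem s hsmem
    have hkey : Real.log (H s / s ^ (n : ℝ)) - Real.log (H r / r ^ (n : ℝ)) ≤
        2 * θ * (Real.log s - Real.log r) + C' * (s ^ α - r ^ α) := by
      rw [hFTCrs]; rw [hgval] at hle; exact hle
    have hHr := hH r hrmem
    have hHs := hH s hsmem
    have hlogHr : Real.log (H r / r ^ (n : ℝ)) =
        Real.log (H r) - (n : ℝ) * Real.log r := by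
      rw [Real.log_div (ne_of_gt hHr) (by positivity), Real.log_rpow hr0]
    have hlogHs : Real.log (H s / s ^ (n : ℝ)) =
        Real.log (H s) - (n : ℝ) * Real.log s := by
      rw [Real.log_div (ne_of_gt hHs) (by positivity), Real.log_rpow hs0]
    have hA : (0:ℝ) < H s / s ^ ((n : ℝ) + 2 * θ) * Real.exp (-(C' * s ^ α)) := by
      positivity
    have hB : (0:ℝ) < H r / r ^ ((n : ℝ) + 2 * θ) * Real.exp (-(C' * r ^ α)) := by
      positivity
    rw [← Real.exp_log hA, ← Real.exp_log hB]
    apply Real.exp_le_exp.mpr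
    have hlogA : Real.log (H s / s ^ ((n : ℝ) + 2 * θ) * Real.exp (-(C' * s ^ α))) =
        Real.log (H s) - ((n : ℝ) + 2 * θ) * Real.log s - C' * s ^ α := by
      rw [Real.log_mul (by positivity) (Real.exp_ne_zero _),
        Real.log_div (ne_of_gt hHs) (by positivity), Real.log_rpow hs0, Real.log_exp]
      ring
    have hlogB : Real.log (H r / r ^ ((n : ℝ) + 2 * θ) * Real.exp (-(C' * r ^ α))) =
        Real.log (H r) - ((n : ℝ) + 2 * θ) * Real.log r - C' * r ^ α := by
      rw [Real.log_mul (by positivity) (Real.exp_ne_zero _),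
        Real.log_div (ne_of_gt hHr) (by positivity), Real.log_rpow hr0, Real.log_exp]
      ring
    rw [hlogA, hlogB]
    rw [hlogHr, hlogHs] at hkey
    linarith
  refine ⟨mono, ?_⟩
  have hs0pos : 0 < rε / 2 := by positivity
  set s₀ : ℝ := rε / 2 with hs₀
  have hs₀mem : s₀ ∈ Set.Ioc (0 : ℝ) rε := ⟨hs0pos, by linarith⟩
  set κ : ℝ := H s₀ / s₀ ^ ((n : ℝ) + 2 * θ) * Real.exp (-(C' * s₀ ^ α)) with hκ
  have hκpos : 0 < κ := by
    have := hH s₀ hs₀mem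
    positivity
  have hmemS : θ ∈ {θ' : ℝ | 0 < liminf
      (fun ρ : ℝ => ENNReal.ofReal (H ρ / ρ ^ ((n : ℝ) + 2 * θ'))) (𝓝[>] (0 : ℝ))} := by
    have hev : ∀ᶠ ρ in 𝓝[>] (0:ℝ),
        ENNReal.ofReal κ ≤ ENNReal.ofReal (H ρ / ρ ^ ((n : ℝ) + 2 * θ)) := by
      filter_upwards [Ioo_mem_nhdsGT_of_mem ⟨le_refl (0:ℝ), hs0pos⟩] with ρ hρ
      have hρ0 : 0 < ρ := hρ.1
      have hρmem : ρ ∈ Set.Ioc (0 : ℝ) rε := ⟨hρ0, by linarith [hρ.2]⟩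
      have hHρ := hH ρ hρmem
      have h1 : κ ≤ H ρ / ρ ^ ((n : ℝ) + 2 * θ) * Real.exp (-(C' * ρ ^ α)) :=
        mono ρ s₀ hρ0 hρ.2 (by rw [hs₀]; linarith)
      have h2 : H ρ / ρ ^ ((n : ℝ) + 2 * θ) * Real.exp (-(C' * ρ ^ α)) ≤
          H ρ / ρ ^ ((n : ℝ) + 2 * θ) := by
        nth_rewrite 2 [← mul_one (H ρ / ρ ^ ((n : ℝ) + 2 * θ))]
        apply mul_le_mul_of_nonneg_left _ (by positivity)
        exact Real.exp_le_one_iff.mpr (by positivity |> neg_nonpos_of_nonneg)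
      exact ENNReal.ofReal_le_ofReal (h1.trans h2)
    have hlim : ENNReal.ofReal κ ≤ liminf
        (fun ρ : ℝ => ENNReal.ofReal (H ρ / ρ ^ ((n : ℝ) + 2 * θ))) (𝓝[>] (0 : ℝ)) :=
      le_liminf_of_le (by isBoundedDefault) hev
    exact lt_of_lt_of_le (ENNReal.ofReal_pos.mpr hκpos) hlim
  exact sInf_le (Set.mem_image_of_mem _ hmemS)
end
end

section
/- Let μ be a finite Borel measure on ℝ^{n+1}, let Φ(x) = x₀ + M(x−x₀) with M symmetric and λ^{1/2} Id ≤ M ≤ Λ^{1/2} Id, and let μ_Φ = (Φ⁻¹)_# μ be the pushforward of μ under Φ⁻¹. Define the mean-flatness β_μ(p,r) = inf_L ( r^{−n−1} ∫_{B_r(p)} dist²(y,L) dμ(y) )^{1/2}, infimum over affine (n−1)-planes L. Then for every R ≥ 1 + 2λ^{−1/2} and p with |p−x₀| ≤ r: β_μ(p,r)² ≤ C R^{n+1} Λ · β_{μ_Φ}(p, R r)², with C a dimensional constant. -/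
open MeasureTheory Metric
open scoped RealInnerProductSpace
set_option maxHeartbeats 1000000

noncomputable section

abbrev Euc (n : ℕ) : Type := EuclideanSpace ℝ (Fin (n + 1))

/-- The squared mean-flatness (Jones-type β-number) of a measure `μ` at `p`, scale `r`:
`β_μ(p,r)² = inf_L r^{−n−1} ∫_{B_r(p)} dist²(y, L) dμ(y)`, the infimum running over affine
`(n−1)`-dimensional planes `L`. -/
noncomputable def beta2 (n : ℕ) (μ : Measure (Euc n)) (p : Euc n) (r : ℝ) : ℝ :=
  sInf {v : ℝ | ∃ L : AffineSubspace ℝ (Euc n), (L : Set (Euc n)).Nonempty ∧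
    Module.finrank ℝ L.direction = n - 1 ∧
    v = r ^ (-(n : ℝ) - 1) * ∫ y in ball p r, (infDist y (L : Set (Euc n))) ^ 2 ∂μ}

/-- Cauchy–Schwarz for the symmetric positive semidefinite form `⟪M ·, ·⟫`. -/
lemma sym_cs {n : ℕ} (M : Euc n →L[ℝ] Euc n)
    (hsym : ∀ ξ η : Euc n, ⟪M ξ, η⟫ = ⟪ξ, M η⟫)
    (hpos : ∀ ξ : Euc n, 0 ≤ ⟪M ξ, ξ⟫) (ξ η : Euc n) :
    ⟪M ξ, η⟫ ^ 2 ≤ ⟪M ξ, ξ⟫ * ⟪M η, η⟫ := by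
  have hsymm : ⟪M η, ξ⟫ = ⟪M ξ, η⟫ := by
    rw [hsym η ξ, real_inner_comm]
  have key : ∀ t : ℝ, 0 ≤ ⟪M η, η⟫ * (t * t) + (2 * ⟪M ξ, η⟫) * t + ⟪M ξ, ξ⟫ := by
    intro t
    have h0 := hpos (ξ + t • η)
    have hexp : ⟪M (ξ + t • η), ξ + t • η⟫
        = ⟪M η, η⟫ * (t * t) + (2 * ⟪M ξ, η⟫) * t + ⟪M ξ, ξ⟫ := by
      rw [map_add, M.map_smul]
      simp only [inner_add_left, inner_add_right, inner_smul_left, inner_smul_right,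
        RCLike.conj_to_real]
      rw [hsymm]; ring
    linarith [hexp ▸ h0]
  have hd := discrim_le_zero key
  rw [discrim] at hd
  nlinarith [hd]

lemma norm_M_le {n : ℕ} (M : Euc n →L[ℝ] Euc n) (c : ℝ) (hc : 0 ≤ c)
    (hsym : ∀ ξ η : Euc n, ⟪M ξ, η⟫ = ⟪ξ, M η⟫)
    (hpos : ∀ ξ : Euc n, 0 ≤ ⟪M ξ, ξ⟫)
    (hub : ∀ ξ : Euc n, ⟪M ξ, ξ⟫ ≤ c * ‖ξ‖ ^ 2) (ξ : Euc n) :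
    ‖M ξ‖ ≤ c * ‖ξ‖ := by
  have h1 := sym_cs M hsym hpos ξ (M ξ)
  have h2 : ⟪M ξ, M ξ⟫ = ‖M ξ‖ ^ 2 := real_inner_self_eq_norm_sq _
  have h3 := hub ξ
  have h4 := hub (M ξ)
  have h5 := hpos ξ
  have hn : (0:ℝ) ≤ ‖M ξ‖ := norm_nonneg _
  have hn2 : (0:ℝ) ≤ ‖ξ‖ := norm_nonneg _
  rcases eq_or_lt_of_le hn with h | h
  · rw [← h]; positivity
  · have hmm := mul_le_mul h3 h4 (hpos (M ξ)) (by positivity : (0:ℝ) ≤ c * ‖ξ‖ ^ 2)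
    have h6 : ‖M ξ‖ ^ 2 * ‖M ξ‖ ^ 2 ≤ (c * ‖ξ‖) ^ 2 * ‖M ξ‖ ^ 2 := by nlinarith
    have h7 : ‖M ξ‖ ^ 2 ≤ (c * ‖ξ‖) ^ 2 :=
      le_of_mul_le_mul_right h6 (by positivity)
    calc ‖M ξ‖ = Real.sqrt (‖M ξ‖ ^ 2) := (Real.sqrt_sq hn).symm
      _ ≤ Real.sqrt ((c * ‖ξ‖) ^ 2) := Real.sqrt_le_sqrt h7
      _ = c * ‖ξ‖ := Real.sqrt_sq (by positivity)

lemma exists_plane (n : ℕ) (p : Euc n) : ∃ L : AffineSubspace ℝ (Euc n),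
    (L : Set (Euc n)).Nonempty ∧ Module.finrank ℝ L.direction = n - 1 := by
  classical
  set b := (EuclideanSpace.basisFun (Fin (n+1)) ℝ).toBasis with hb
  set v : Fin (n-1) → Euc n := fun i => b (Fin.castLE (by omega) i) with hv
  have hli : LinearIndependent ℝ v :=
    b.linearIndependent.comp _ (Fin.castLE_injective _)
  refine ⟨AffineSubspace.mk' p (Submodule.span ℝ (Set.range v)),
    ⟨p, AffineSubspace.self_mem_mk' _ _⟩, ?_⟩
  rw [AffineSubspace.direction_mk', finrank_span_eq_card hli]
  simp

/-- The affine map `x ↦ x₀ + M (x - x₀)`. -/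
def phiA {n : ℕ} (x₀ : Euc n) (M : Euc n →L[ℝ] Euc n) : Euc n →ᵃ[ℝ] Euc n :=
  AffineMap.mk' (fun x => x₀ + M (x - x₀)) (M : Euc n →ₗ[ℝ] Euc n) x₀ (by
    intro p'
    simp only [ContinuousLinearMap.coe_coe]
    rw [vsub_eq_sub, vadd_eq_add]
    simp [add_comm])

lemma sInf_le_mul_sInf {A B : Set ℝ} {K : ℝ} (hK : 0 < K) (hB : B.Nonempty)
    (hA0 : ∀ w ∈ A, 0 ≤ w) (h : ∀ v ∈ B, ∃ w ∈ A, w ≤ K * v) :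
    sInf A ≤ K * sInf B := by
  have hAbdd : BddBelow A := ⟨0, fun w hw => hA0 w hw⟩
  rw [mul_comm, ← div_le_iff₀ hK]
  refine le_csInf hB fun v hv => ?_
  obtain ⟨w, hwA, hwle⟩ := h v hv
  rw [div_le_iff₀ hK]
  calc sInf A ≤ w := csInf_le hAbdd hwA
    _ ≤ K * v := hwle
    _ = v * K := mul_comm _ _

/-- For a finite Borel measure `μ`, `Φ(x) = x₀ + M(x − x₀)` with `M` symmetric
and `λ^{1/2} Id ≤ M ≤ Λ^{1/2} Id`, and `μ_Φ = (Φ⁻¹)_# μ`, one has, for every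
`R ≥ 1 + 2λ^{−1/2}` and `|p − x₀| ≤ r`:
`β_μ(p,r)² ≤ C R^{n+1} Λ β_{μ_Φ}(p, Rr)²` with `C` a dimensional constant. -/
theorem stmt11 (n : ℕ) :
    ∃ C > (0 : ℝ), ∀ lam Lam : ℝ, 0 < lam → lam ≤ Lam →
      ∀ (x₀ : Euc n) (M N : Euc n →L[ℝ] Euc n),
      (∀ ξ η : Euc n, ⟪M ξ, η⟫ = ⟪ξ, M η⟫) →
      (∀ ξ : Euc n, Real.sqrt lam * ‖ξ‖ ^ 2 ≤ ⟪M ξ, ξ⟫ ∧ ⟪M ξ, ξ⟫ ≤ Real.sqrt Lam * ‖ξ‖ ^ 2) →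
      (∀ x : Euc n, N (M x) = x ∧ M (N x) = x) →
      ∀ μ : Measure (Euc n), IsFiniteMeasure μ →
      ∀ R r : ℝ, 1 + 2 / Real.sqrt lam ≤ R → 0 < r →
      ∀ p : Euc n, ‖p - x₀‖ ≤ r →
        beta2 n μ p r ≤ C * R ^ (n + 1) * Lam *
          beta2 n (Measure.map (fun x => x₀ + N (x - x₀)) μ) p (R * r) := by
  refine ⟨1, one_pos, ?_⟩
  intro lam Lam hlam hlL x₀ M N hsym hbounds hinv μ hμfin R r hR hr p hp
  have hLam0 : 0 < Lam := lt_of_lt_of_le hlam hlL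
  have hslam : 0 < Real.sqrt lam := Real.sqrt_pos.2 hlam
  have hsLam : 0 < Real.sqrt Lam := Real.sqrt_pos.2 hLam0
  have hR1 : (1:ℝ) ≤ R := by
    have h2 : (0:ℝ) ≤ 2 / Real.sqrt lam := by positivity
    linarith
  have hR0 : (0:ℝ) < R := lt_of_lt_of_le one_pos hR1
  -- operator norm bounds
  have hpos : ∀ ξ : Euc n, 0 ≤ ⟪M ξ, ξ⟫ := fun ξ => le_trans (by positivity) (hbounds ξ).1
  have hMnorm : ∀ ξ : Euc n, ‖M ξ‖ ≤ Real.sqrt Lam * ‖ξ‖ :=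
    norm_M_le M _ hsLam.le hsym hpos (fun ξ => (hbounds ξ).2)
  have hNnorm : ∀ x : Euc n, Real.sqrt lam * ‖N x‖ ≤ ‖x‖ := by
    intro x
    have h1 := (hbounds (N x)).1
    have h2 : ⟪M (N x), N x⟫ ≤ ‖M (N x)‖ * ‖N x‖ := real_inner_le_norm _ _
    rw [(hinv x).2] at h1 h2
    rcases eq_or_ne (N x) 0 with h0 | h0
    · rw [h0, norm_zero, mul_zero]; positivity
    · have hpos' : 0 < ‖N x‖ := norm_pos_iff.2 h0
      nlinarith
  set Ψ : Euc n → Euc n := fun x => x₀ + N (x - x₀) with hΨdef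
  have hΨcont : Continuous Ψ := by
    apply Continuous.add continuous_const
    exact N.continuous.comp (continuous_id.sub continuous_const)
  set ν : Measure (Euc n) := Measure.map Ψ μ with hνdef
  rw [beta2, beta2, one_mul, mul_assoc, ← mul_assoc]
  -- use the helper lemma
  set e : ℝ := -(n:ℝ) - 1 with he
  have hKpos : (0:ℝ) < R ^ (n+1) * Lam := by positivity
  apply sInf_le_mul_sInf hKpos
  · -- B nonempty
    obtain ⟨L₀, hL₀ne, hL₀rk⟩ := exists_plane n p
    exact ⟨_, L₀, hL₀ne, hL₀rk, rfl⟩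
  · -- A elements nonneg
    rintro w ⟨L, hLne, hLrk, rfl⟩
    exact mul_nonneg (Real.rpow_nonneg hr.le _)
      (integral_nonneg fun y => sq_nonneg _)
  · -- main estimate
    rintro v ⟨L, hLne, hLrk, rfl⟩
    set f := phiA x₀ M with hfdef
    set L' := L.map f with hL'def
    have hMN : ∀ x, M (N x) = x := fun x => (hinv x).2
    have hNM : ∀ x, N (M x) = x := fun x => (hinv x).1
    have hL'ne : ((L' : Set (Euc n))).Nonempty := by
      obtain ⟨x, hx⟩ := hLne
      exact ⟨f x, AffineSubspace.mem_map.2 ⟨x, hx, rfl⟩⟩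
    have hL'rk : Module.finrank ℝ L'.direction = n - 1 := by
      rw [hL'def, AffineSubspace.map_direction]
      have hf : f.linear = (ContinuousLinearEquiv.equivOfInverse M N hNM hMN :
          Euc n ≃ₗ[ℝ] Euc n) := rfl
      rw [hf, LinearEquiv.finrank_map_eq]
      exact hLrk
    refine ⟨_, ⟨L', hL'ne, hL'rk, rfl⟩, ?_⟩
    -- key pointwise distance estimate
    have hkey : ∀ y x : Euc n, y - f x = M (Ψ y - x) := by
      intro y x
      have h1 : M (N (y - x₀)) = y - x₀ := hMN _
      show y - (x₀ + M (x - x₀)) = M (x₀ + N (y - x₀) - x)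
      have h2 : x₀ + N (y - x₀) - x = N (y - x₀) + (x₀ - x) := by abel
      rw [h2, map_add, h1, map_sub, map_sub]
      abel
    have hdist : ∀ y : Euc n, infDist y (L' : Set (Euc n))
        ≤ Real.sqrt Lam * infDist (Ψ y) (L : Set (Euc n)) := by
      intro y
      by_contra hcon
      push_neg at hcon
      have hlt : infDist (Ψ y) (L : Set (Euc n))
          < infDist y (L' : Set (Euc n)) / Real.sqrt Lam := by
        rw [lt_div_iff₀ hsLam]; linarith [mul_comm (Real.sqrt Lam) (infDist (Ψ y) (L : Set (Euc n)))]
      obtain ⟨x, hxL, hdx⟩ := (infDist_lt_iff hLne).1 hlt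
      have h1 : infDist y (L' : Set (Euc n)) ≤ dist y (f x) :=
        infDist_le_dist_of_mem (AffineSubspace.mem_map.2 ⟨x, hxL, rfl⟩)
      have h2 : dist y (f x) ≤ Real.sqrt Lam * dist (Ψ y) x := by
        rw [dist_eq_norm, hkey y x, dist_eq_norm]
        exact hMnorm _
      have h3 : Real.sqrt Lam * dist (Ψ y) x
          < Real.sqrt Lam * (infDist y (L' : Set (Euc n)) / Real.sqrt Lam) :=
        (mul_lt_mul_iff_right₀ hsLam).2 hdx
      rw [mul_div_cancel₀ _ hsLam.ne'] at h3
      linarith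
    -- inclusion of balls
    have hsubset : ball p r ⊆ Ψ ⁻¹' ball p (R * r) := by
      intro y hy
      rw [mem_ball, dist_eq_norm] at hy
      simp only [Set.mem_preimage, mem_ball, dist_eq_norm]
      have h1 : Real.sqrt lam * ‖N (y - x₀)‖ ≤ ‖y - x₀‖ := hNnorm _
      have h2 : ‖y - x₀‖ ≤ ‖y - p‖ + ‖p - x₀‖ := norm_sub_le_norm_sub_add_norm_sub y p x₀
      have h3 : Ψ y - p = N (y - x₀) + (x₀ - p) := by
        show x₀ + N (y - x₀) - p = N (y - x₀) + (x₀ - p); abel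
      have h4 : ‖Ψ y - p‖ ≤ ‖N (y - x₀)‖ + ‖p - x₀‖ := by
        rw [h3]
        calc ‖N (y - x₀) + (x₀ - p)‖ ≤ ‖N (y - x₀)‖ + ‖x₀ - p‖ := norm_add_le _ _
          _ = ‖N (y - x₀)‖ + ‖p - x₀‖ := by rw [norm_sub_rev]
      have h5 : ‖N (y - x₀)‖ < 2 * r / Real.sqrt lam := by
        rw [lt_div_iff₀ hslam]
        nlinarith
      have h6 : (1 + 2 / Real.sqrt lam) * r ≤ R * r :=
        mul_le_mul_of_nonneg_right hR hr.le
      have h7 : 2 * r / Real.sqrt lam = 2 / Real.sqrt lam * r := by ring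
      nlinarith
    -- integrability facts
    set D : Euc n → ℝ := fun y => infDist (Ψ y) (L : Set (Euc n)) ^ 2 with hDdef
    have hDcont : Continuous D := ((continuous_infDist_pt _).comp hΨcont).pow 2
    set T : Set (Euc n) := Ψ ⁻¹' ball p (R * r) with hTdef
    have hTmeas : MeasurableSet T := (isOpen_ball.preimage hΨcont).measurableSet
    have hDint : IntegrableOn D T μ := by
      refine Integrable.mono' (integrable_const ((infDist p (L : Set (Euc n)) + R * r) ^ 2))
        hDcont.aestronglyMeasurable.restrict ?_
      filter_upwards [ae_restrict_mem hTmeas] with y hy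
      rw [Real.norm_eq_abs, abs_of_nonneg (sq_nonneg _)]
      have hb : infDist (Ψ y) (L : Set (Euc n)) ≤ infDist p (L : Set (Euc n)) + R * r := by
        have := infDist_le_infDist_add_dist (x := Ψ y) (y := p) (s := (L : Set (Euc n)))
        have hyb : dist (Ψ y) p < R * r := by
          have := hy; rwa [hTdef, Set.mem_preimage, mem_ball] at this
        linarith
      have h0 : 0 ≤ infDist (Ψ y) (L : Set (Euc n)) := infDist_nonneg
      show infDist (Ψ y) (L : Set (Euc n)) ^ 2 ≤ (infDist p (L : Set (Euc n)) + R * r) ^ 2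
      nlinarith
    set F : Euc n → ℝ := fun y => infDist y (L' : Set (Euc n)) ^ 2 with hFdef
    have hFcont : Continuous F := (continuous_infDist_pt _).pow 2
    have hFint : IntegrableOn F (ball p r) μ := by
      refine Integrable.mono' (integrable_const ((infDist p (L' : Set (Euc n)) + r) ^ 2))
        hFcont.aestronglyMeasurable.restrict ?_
      filter_upwards [ae_restrict_mem measurableSet_ball] with y hy
      rw [Real.norm_eq_abs, abs_of_nonneg (sq_nonneg _)]
      have hb : infDist y (L' : Set (Euc n)) ≤ infDist p (L' : Set (Euc n)) + r := by
        have := infDist_le_infDist_add_dist (x := y) (y := p) (s := (L' : Set (Euc n)))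
        rw [mem_ball] at hy
        linarith
      have h0 : 0 ≤ infDist y (L' : Set (Euc n)) := infDist_nonneg
      show infDist y (L' : Set (Euc n)) ^ 2 ≤ (infDist p (L' : Set (Euc n)) + r) ^ 2
      nlinarith
    -- the chain of integral inequalities
    have step1 : ∫ y in ball p r, F y ∂μ ≤ ∫ y in ball p r, Lam * D y ∂μ := by
      refine setIntegral_mono_on hFint
        (((hDint.mono_set hsubset)).const_mul Lam) measurableSet_ball ?_
      intro y _
      have h1 := hdist y
      have h2 : 0 ≤ infDist y (L' : Set (Euc n)) := infDist_nonneg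
      have h3 : 0 ≤ infDist (Ψ y) (L : Set (Euc n)) := infDist_nonneg
      have h4 : Real.sqrt Lam ^ 2 = Lam := Real.sq_sqrt hLam0.le
      show infDist y (L' : Set (Euc n)) ^ 2 ≤ Lam * (infDist (Ψ y) (L : Set (Euc n)) ^ 2)
      nlinarith
    have step2 : ∫ y in ball p r, Lam * D y ∂μ = Lam * ∫ y in ball p r, D y ∂μ :=
      integral_const_mul Lam _
    have step3 : ∫ y in ball p r, D y ∂μ ≤ ∫ y in T, D y ∂μ := by
      refine setIntegral_mono_set hDint ?_ (HasSubset.Subset.eventuallyLE hsubset)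
      exact Filter.Eventually.of_forall fun y => sq_nonneg _
    have step4 : ∫ y in T, D y ∂μ
        = ∫ z in ball p (R * r), infDist z (L : Set (Euc n)) ^ 2 ∂ν := by
      rw [hνdef]
      exact (setIntegral_map measurableSet_ball
        ((continuous_infDist_pt _).pow 2).aestronglyMeasurable
        hΨcont.measurable.aemeasurable).symm
    -- put it together
    have hI : ∫ y in ball p r, F y ∂μ
        ≤ Lam * ∫ z in ball p (R * r), infDist z (L : Set (Euc n)) ^ 2 ∂ν := by
      rw [← step4]
      calc ∫ y in ball p r, F y ∂μ ≤ ∫ y in ball p r, Lam * D y ∂μ := step1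
        _ = Lam * ∫ y in ball p r, D y ∂μ := step2
        _ ≤ Lam * ∫ y in T, D y ∂μ := by
            exact mul_le_mul_of_nonneg_left step3 hLam0.le
    have hre : (0:ℝ) < r ^ e := Real.rpow_pos_of_pos hr _
    have hpow : r ^ e = R ^ (n+1) * (R * r) ^ e := by
      rw [Real.mul_rpow hR0.le hr.le, ← mul_assoc]
      have : (R:ℝ) ^ (n+1) * R ^ e = 1 := by
        rw [← Real.rpow_natCast R (n+1), ← Real.rpow_add hR0, he]
        push_cast
        norm_num
      rw [this, one_mul]
    calc r ^ e * ∫ y in ball p r, F y ∂μ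
        ≤ r ^ e * (Lam * ∫ z in ball p (R * r), infDist z (L : Set (Euc n)) ^ 2 ∂ν) :=
          mul_le_mul_of_nonneg_left hI hre.le
      _ = R ^ (n+1) * Lam *
          ((R * r) ^ e * ∫ z in ball p (R * r), infDist z (L : Set (Euc n)) ^ 2 ∂ν) := by
          rw [hpow]; ring
end
end

section
/- Let E : (0,1) → ℝ be locally absolutely continuous, nonnegative, and suppose there exist constants C > 0 and n ≥ 1 such that E'(r) ≥ −C E(r) + ((n−1)/r) E(r) + 2 F(r) for a.e. r, where F(r) ≥ 0, and let H : (0,1) → (0,∞) be locally absolutely continuous with |H'(r) − (n/r)H(r) − 2E(r)| ≤ C·H(r) (using E(r) = ∫_{∂B_r} u ⟨A∇u, ν⟩, assumed equal to both the bulk energy and the boundary flux). If additionally 2 H(r) F(r) ≥ 2 E(r)², then I(r) = r E(r)/H(r) satisfies I'(r) ≥ −C' I(r) for a.e. r, with C' depending only on C; hence r ↦ e^{C'r} I(r) is nondecreasing on (0,1). -/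
/-!
Put `G(r) = e^{2Cr} r E(r) / H(r)`. On every compact subinterval `E` and `H` are absolutely
continuous and `H` is bounded away from `0`, so `G` is absolutely continuous, and almost
everywhere `G' = e^{2Cr} H⁻² ((2Cr + 1) E H + r E' H - r E H')`. Inserting the lower bound
for `E'`, the upper bound for `H'` and `H F ≥ E²`, all terms of the bracket cancel, so
`G' ≥ 0` a.e. and `G` is nondecreasing. The bound `I' ≥ -2C I` is then the nonnegativity of
the derivative of the monotone function `G = e^{2Cr} I`.
-/

open MeasureTheory Set Filter Topology

namespace AbsolutelyContinuousOnInterval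

variable {a b : ℝ}

theorem congr {X : Type*} [PseudoMetricSpace X] {f g : ℝ → X}
    (hf : AbsolutelyContinuousOnInterval f a b) (hfg : EqOn f g (uIcc a b)) :
    AbsolutelyContinuousOnInterval g a b := by
  refine hf.congr' ?_
  rw [eventuallyEq_inf_principal_iff]
  filter_upwards with ⟨n, I⟩ hI
  refine Finset.sum_congr rfl fun i hi => ?_
  rw [hfg (hI.1 i hi).1, hfg (hI.1 i hi).2]

theorem inv {f : ℝ → ℝ} (hf : AbsolutelyContinuousOnInterval f a b)
    (hf₀ : ∀ x ∈ uIcc a b, f x ≠ 0) :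
    AbsolutelyContinuousOnInterval f⁻¹ a b := by
  -- `|f| ≥ δ > 0` on the interval, where `x ↦ x⁻¹` is `δ⁻²`-Lipschitz.
  obtain ⟨x₀, hx₀, hmin⟩ := isCompact_uIcc.exists_isMinOn nonempty_uIcc hf.continuousOn.abs
  set δ := |f x₀|
  have hδ : 0 < δ := abs_pos.mpr (hf₀ x₀ hx₀)
  unfold AbsolutelyContinuousOnInterval at hf ⊢
  refine squeeze_zero' (Eventually.of_forall fun _ => Finset.sum_nonneg fun _ _ => dist_nonneg)
    ?_ (by simpa using hf.const_mul (δ ^ 2)⁻¹)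
  rw [eventually_inf_principal]
  filter_upwards with ⟨n, I⟩ hI
  rw [Finset.mul_sum]
  refine Finset.sum_le_sum fun i hi => ?_
  have h1 : δ ≤ |f (I i).1| := hmin (hI.1 i hi).1
  have h2 : δ ≤ |f (I i).2| := hmin (hI.1 i hi).2
  have h1' : f (I i).1 ≠ 0 := hf₀ _ (hI.1 i hi).1
  have h2' : f (I i).2 ≠ 0 := hf₀ _ (hI.1 i hi).2
  simp only [Pi.inv_apply, dist_eq_norm, Real.norm_eq_abs]
  rw [inv_sub_inv h1' h2', abs_div, abs_mul, abs_sub_comm, div_eq_inv_mul]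
  gcongr
  nlinarith [abs_nonneg (f (I i).1)]

theorem le_of_ae_deriv_nonneg {f : ℝ → ℝ} (hf : AbsolutelyContinuousOnInterval f a b)
    (hab : a ≤ b) (hf' : ∀ᵐ x, x ∈ Icc a b → 0 ≤ deriv f x) : f a ≤ f b := by
  rw [← sub_nonneg, ← hf.integral_deriv_eq_sub]
  exact intervalIntegral.integral_nonneg_of_ae_restrict hab
    ((ae_restrict_iff' measurableSet_Icc).mpr hf')

end AbsolutelyContinuousOnInterval

section FundamentalTheorem

variable {f f' : ℝ → ℝ} {a b : ℝ}

theorem absolutelyContinuousOnInterval_of_sub_eq_integral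
    (hf' : IntervalIntegrable f' volume a b)
    (hf : ∀ x ∈ uIcc a b, f x - f a = ∫ t in a..x, f' t) :
    AbsolutelyContinuousOnInterval f a b := by
  have hconst : AbsolutelyContinuousOnInterval (fun _ => f a) a b :=
    (LipschitzWith.const (f a)).lipschitzOnWith.absolutelyContinuousOnInterval
  refine (hconst.fun_add (hf'.absolutelyContinuousOnInterval_intervalIntegral left_mem_uIcc)).congr
    fun x hx => ?_
  simp only
  linarith [hf x hx]

theorem ae_hasDerivAt_of_sub_eq_integral
    (hf' : IntervalIntegrable f' volume a b)
    (hf : ∀ x ∈ uIcc a b, f x - f a = ∫ t in a..x, f' t) :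
    ∀ᵐ x, x ∈ uIcc a b → HasDerivAt f (f' x) x := by
  have hne (c : ℝ) : ∀ᵐ x : ℝ, c ≠ x := by simp [ae_iff, measure_singleton]
  filter_upwards [hf'.ae_hasDerivAt_integral, hne a, hne b] with x hx hax hbx hmem
  have hnhds : uIcc a b ∈ 𝓝 x := by
    refine Icc_mem_nhds (hmem.1.lt_of_ne ?_) (hmem.2.lt_of_ne' ?_)
    · rcases min_choice a b with h | h <;> rw [h] <;> assumption
    · rcases max_choice a b with h | h <;> rw [h] <;> assumption
  refine (hx hmem a left_mem_uIcc).const_add (f a) |>.congr_of_eventuallyEq ?_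
  filter_upwards [hnhds] with y hy
  linarith [hf y hy]

end FundamentalTheorem

theorem HasDerivAt.nonneg_of_monotoneOn_of_mem_nhds {g : ℝ → ℝ} {g' x : ℝ} {s : Set ℝ}
    (hg : HasDerivAt g g' x) (hs : s ∈ 𝓝 x) (hmono : MonotoneOn g s) : 0 ≤ g' := by
  have hacc : AccPt x (𝓟 s) := by
    simpa using (PerfectSpace.univ_preperfect x (mem_univ x)).nhds_inter hs
  exact hg.hasDerivWithinAt.nonneg_of_monotoneOn hacc hmono

theorem frequency_numerator_nonneg {C n t e e' f h h' : ℝ} (ht : 0 < t) (he : 0 ≤ e)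
    (hh : 0 < h) (he' : e' ≥ -C * e + ((n - 1) / t) * e + 2 * f)
    (hh' : |h' - (n / t) * h - 2 * e| ≤ C * h) (hcs : 2 * h * f ≥ 2 * e ^ 2) :
    0 ≤ (2 * C * t + 1) * e * h + t * e' * h - t * e * h' := by
  have hh'_le : h' ≤ (n / t) * h + 2 * e + C * h := by linarith [(abs_le.mp hh').2]
  have he'_mul : t * h * (-C * e + ((n - 1) / t) * e + 2 * f) ≤ t * h * e' :=
    mul_le_mul_of_nonneg_left he' (by positivity)
  have hh'_mul : t * e * h' ≤ t * e * ((n / t) * h + 2 * e + C * h) :=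
    mul_le_mul_of_nonneg_left hh'_le (by positivity)
  have hcs_mul : t * e ^ 2 ≤ t * (h * f) := mul_le_mul_of_nonneg_left (by linarith) ht.le
  have he'_eq : t * h * (-C * e + ((n - 1) / t) * e + 2 * f)
      = -C * t * h * e + (n - 1) * h * e + 2 * (t * (h * f)) := by field_simp
  have hh'_eq : t * e * ((n / t) * h + 2 * e + C * h)
      = n * h * e + 2 * (t * e ^ 2) + C * t * h * e := by field_simp
  linarith

theorem deriv_exp_mul_frequency_nonneg {C n x e' h' f : ℝ} {E H : ℝ → ℝ} (hx : 0 < x)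
    (hE : HasDerivAt E e' x) (hH : HasDerivAt H h' x) (hEx : 0 ≤ E x) (hHx : 0 < H x)
    (he' : e' ≥ -C * E x + ((n - 1) / x) * E x + 2 * f)
    (hh' : |h' - (n / x) * H x - 2 * E x| ≤ C * H x) (hcs : 2 * H x * f ≥ 2 * (E x) ^ 2) :
    0 ≤ deriv (fun r => Real.exp (2 * C * r) * (r * E r / H r)) x := by
  have hderiv : HasDerivAt (fun r => Real.exp (2 * C * r) * (r * E r / H r))
      (Real.exp (2 * C * x) / H x ^ 2 *
        ((2 * C * x + 1) * E x * H x + x * e' * H x - x * E x * h')) x := by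
    refine (((hasDerivAt_id' x).const_mul (2 * C)).exp.fun_mul
      (((hasDerivAt_id' x).fun_mul hE).fun_div hH hHx.ne')).congr_deriv ?_
    field_simp
    ring
  rw [hderiv.deriv]
  have hnum := frequency_numerator_nonneg hx hEx hHx he' hh' hcs
  positivity

section Frequency

variable {C n : ℝ} {E E' F H H' : ℝ → ℝ} {s : Set ℝ}

theorem frequency_monotoneOn (hs : s.OrdConnected) (hs₀ : s ⊆ Ioi 0)
    (hE_nonneg : ∀ r ∈ s, 0 ≤ E r) (hH_pos : ∀ r ∈ s, 0 < H r)
    (hE_int : ∀ a ∈ s, ∀ b ∈ s, IntervalIntegrable E' volume a b)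
    (hE_ftc : ∀ a ∈ s, ∀ b ∈ s, E b - E a = ∫ r in a..b, E' r)
    (hH_int : ∀ a ∈ s, ∀ b ∈ s, IntervalIntegrable H' volume a b)
    (hH_ftc : ∀ a ∈ s, ∀ b ∈ s, H b - H a = ∫ r in a..b, H' r)
    (hE' : ∀ᵐ r ∂(volume.restrict s), E' r ≥ -C * E r + ((n - 1) / r) * E r + 2 * F r)
    (hH' : ∀ᵐ r ∂(volume.restrict s), |H' r - (n / r) * H r - 2 * E r| ≤ C * H r)
    (hCS : ∀ r ∈ s, 2 * H r * F r ≥ 2 * (E r) ^ 2) :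
    MonotoneOn (fun r => Real.exp (2 * C * r) * (r * E r / H r)) s := by
  intro a ha b hb hab
  have hsub : uIcc a b ⊆ s := hs.uIcc_subset ha hb
  have hE_ftc' : ∀ x ∈ uIcc a b, E x - E a = ∫ r in a..x, E' r :=
    fun x hx => hE_ftc a ha x (hsub hx)
  have hH_ftc' : ∀ x ∈ uIcc a b, H x - H a = ∫ r in a..x, H' r :=
    fun x hx => hH_ftc a ha x (hsub hx)
  have hE_ac := absolutelyContinuousOnInterval_of_sub_eq_integral (hE_int a ha b hb) hE_ftc'
  have hH_ac := absolutelyContinuousOnInterval_of_sub_eq_integral (hH_int a ha b hb) hH_ftc'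
  have hφ_ac : AbsolutelyContinuousOnInterval (fun r => Real.exp (2 * C * r) * r) a b :=
    ContDiffOn.absolutelyContinuousOnInterval (by fun_prop)
  have hG_ac : AbsolutelyContinuousOnInterval
      (fun r => Real.exp (2 * C * r) * (r * E r / H r)) a b :=
    ((hφ_ac.fun_mul hE_ac).fun_mul (hH_ac.inv fun x hx => (hH_pos x (hsub hx)).ne')).congr
      fun x _ => by simp only [Pi.inv_apply]; ring
  have hIcc : Icc a b ⊆ s := Icc_subset_uIcc.trans hsub
  refine hG_ac.le_of_ae_deriv_nonneg hab ?_
  filter_upwards [ae_hasDerivAt_of_sub_eq_integral (hE_int a ha b hb) hE_ftc',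
    ae_hasDerivAt_of_sub_eq_integral (hH_int a ha b hb) hH_ftc',
    (ae_restrict_iff' measurableSet_Icc).mp (ae_restrict_of_ae_restrict_of_subset hIcc hE'),
    (ae_restrict_iff' measurableSet_Icc).mp (ae_restrict_of_ae_restrict_of_subset hIcc hH')]
    with x hEx hHx hE'x hH'x hx
  have hxs : x ∈ s := hIcc hx
  exact deriv_exp_mul_frequency_nonneg (hs₀ hxs) (hEx (Icc_subset_uIcc hx))
    (hHx (Icc_subset_uIcc hx)) (hE_nonneg x hxs) (hH_pos x hxs) (hE'x hx) (hH'x hx) (hCS x hxs)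

end Frequency

theorem stmt19_general (C n : ℝ) (hC : 0 < C)
    (E E' F H H' : ℝ → ℝ)
    (hE_nonneg : ∀ r ∈ Set.Ioo (0 : ℝ) 1, 0 ≤ E r)
    (hH_pos : ∀ r ∈ Set.Ioo (0 : ℝ) 1, 0 < H r)
    (hE_int : ∀ a ∈ Set.Ioo (0 : ℝ) 1, ∀ b ∈ Set.Ioo (0 : ℝ) 1,
      IntervalIntegrable E' volume a b)
    (hE_ftc : ∀ a ∈ Set.Ioo (0 : ℝ) 1, ∀ b ∈ Set.Ioo (0 : ℝ) 1,
      E b - E a = ∫ r in a..b, E' r)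
    (hH_int : ∀ a ∈ Set.Ioo (0 : ℝ) 1, ∀ b ∈ Set.Ioo (0 : ℝ) 1,
      IntervalIntegrable H' volume a b)
    (hH_ftc : ∀ a ∈ Set.Ioo (0 : ℝ) 1, ∀ b ∈ Set.Ioo (0 : ℝ) 1,
      H b - H a = ∫ r in a..b, H' r)
    (hE' : ∀ᵐ r ∂(volume.restrict (Set.Ioo (0 : ℝ) 1)),
      E' r ≥ -C * E r + ((n - 1) / r) * E r + 2 * F r)
    (hH' : ∀ᵐ r ∂(volume.restrict (Set.Ioo (0 : ℝ) 1)),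
      |H' r - (n / r) * H r - 2 * E r| ≤ C * H r)
    (hCS : ∀ r ∈ Set.Ioo (0 : ℝ) 1, 2 * H r * F r ≥ 2 * (E r) ^ 2) :
    ∃ C' > (0 : ℝ),
      (∀ r ∈ Set.Ioo (0 : ℝ) 1, ∀ I' : ℝ,
        HasDerivAt (fun s => s * E s / H s) I' r → I' ≥ -C' * (r * E r / H r)) ∧
      MonotoneOn (fun r => Real.exp (C' * r) * (r * E r / H r)) (Set.Ioo (0 : ℝ) 1) := by
  have hmono := frequency_monotoneOn ordConnected_Ioo (fun r hr => hr.1) hE_nonneg hH_pos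
    hE_int hE_ftc hH_int hH_ftc hE' hH' hCS
  refine ⟨2 * C, by positivity, fun r hr I' hI' => ?_, hmono⟩
  have hderiv := (((hasDerivAt_id' r).const_mul (2 * C)).exp.fun_mul hI')
    |>.nonneg_of_monotoneOn_of_mem_nhds (Ioo_mem_nhds hr.1 hr.2) hmono
  have hexp := Real.exp_pos (2 * C * r)
  nlinarith

/-- Abstract quasi-monotonicity of the energy-driven frequency: if `E ≥ 0` is
locally absolutely continuous on `(0,1)` with `E'(r) ≥ −C E(r) + ((n−1)/r) E(r) + 2 F(r)` a.e.
(`F ≥ 0`), `H > 0` is locally absolutely continuous with `|H'(r) − (n/r)H(r) − 2E(r)| ≤ C H(r)`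
a.e., and the Cauchy–Schwarz inequality `2 H(r) F(r) ≥ 2 E(r)²` holds, then for some `C' > 0`
(depending only on `C`) the frequency `I(r) = r E(r)/H(r)` satisfies `I' ≥ −C' I` wherever it is
differentiable, and `r ↦ e^{C'r} I(r)` is nondecreasing on `(0,1)`. -/
theorem stmt19 (C n : ℝ) (hC : 0 < C) (hn : 1 ≤ n)
    (E E' F H H' : ℝ → ℝ)
    (hE_nonneg : ∀ r ∈ Set.Ioo (0 : ℝ) 1, 0 ≤ E r)
    (hF_nonneg : ∀ r ∈ Set.Ioo (0 : ℝ) 1, 0 ≤ F r)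
    (hH_pos : ∀ r ∈ Set.Ioo (0 : ℝ) 1, 0 < H r)
    (hE_int : ∀ a ∈ Set.Ioo (0 : ℝ) 1, ∀ b ∈ Set.Ioo (0 : ℝ) 1,
      IntervalIntegrable E' volume a b)
    (hE_ftc : ∀ a ∈ Set.Ioo (0 : ℝ) 1, ∀ b ∈ Set.Ioo (0 : ℝ) 1,
      E b - E a = ∫ r in a..b, E' r)
    (hH_int : ∀ a ∈ Set.Ioo (0 : ℝ) 1, ∀ b ∈ Set.Ioo (0 : ℝ) 1,
      IntervalIntegrable H' volume a b)
    (hH_ftc : ∀ a ∈ Set.Ioo (0 : ℝ) 1, ∀ b ∈ Set.Ioo (0 : ℝ) 1,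
      H b - H a = ∫ r in a..b, H' r)
    (hE' : ∀ᵐ r ∂(volume.restrict (Set.Ioo (0 : ℝ) 1)),
      E' r ≥ -C * E r + ((n - 1) / r) * E r + 2 * F r)
    (hH' : ∀ᵐ r ∂(volume.restrict (Set.Ioo (0 : ℝ) 1)),
      |H' r - (n / r) * H r - 2 * E r| ≤ C * H r)
    (hCS : ∀ r ∈ Set.Ioo (0 : ℝ) 1, 2 * H r * F r ≥ 2 * (E r) ^ 2) :
    ∃ C' > (0 : ℝ),
      (∀ r ∈ Set.Ioo (0 : ℝ) 1, ∀ I' : ℝ,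
        HasDerivAt (fun s => s * E s / H s) I' r → I' ≥ -C' * (r * E r / H r)) ∧
      MonotoneOn (fun r => Real.exp (C' * r) * (r * E r / H r)) (Set.Ioo (0 : ℝ) 1) :=
  stmt19_general C n hC E E' F H H' hE_nonneg hH_pos hE_int hE_ftc hH_int hH_ftc hE' hH' hCS
end
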